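/- arXiv:2505.24171 — 5 statements merged into one kernel-verified Lean document; each statement's English description precedes it below -/
import Mathlib

section
/- The Diversity Owen value satisfies Fairness within Component: for TU-games with diversity constraints (N,v,B,d) and (N,w,B,d) and players i,j in the same component B_p that are symmetric in v, DOw_i(N,v+w,B,d) − DOw_i(N,w,B,d) = DOw_j(N,v+w,B,d) − DOw_j(N,w,B,d). -/
open Finset
open scoped Classical

/-- A TU-game with diversity constraints `(N, v, 𝓑, d)` (data only);
the components `B 0, …, B (m-1)` are indexed by `Fin m`. -/
structure DivGame where
  m : ℕ
  N : Finset ℕ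
  v : Finset ℕ → ℝ
  B : Fin m → Finset ℕ
  d : Fin m → ℕ

/-- Membership in the class `GD` of TU-games with diversity constraints:
`v ∅ = 0`, `𝓑` is a partition of `N` into components, and `1 ≤ d k ≤ |B k|`. -/
def IsGD (G : DivGame) : Prop :=
  G.v ∅ = 0 ∧
  (∀ k, G.B k ⊆ G.N) ∧
  (∀ i ∈ G.N, ∃! k, i ∈ G.B k) ∧
  (∀ k, 1 ≤ G.d k ∧ G.d k ≤ (G.B k).card)

/-- `S` is a diverse coalition: `|S ∩ B k| ≥ d k` for every component index `k`. -/
def DiverseCoal (G : DivGame) (S : Finset ℕ) : Prop :=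
  ∀ k, G.d k ≤ (S ∩ G.B k).card

/-- The diversity-restricted game `v^d`. -/
noncomputable def restrictedGame (G : DivGame) : Finset ℕ → ℝ :=
  fun S => if DiverseCoal G S then G.v S else 0

/-- The Owen value of player `i` in the game `v` with coalition structure `B` on `Fin m`. -/
noncomputable def Owen (m : ℕ) (v : Finset ℕ → ℝ) (B : Fin m → Finset ℕ) (i : ℕ) : ℝ :=
  ∑ k ∈ univ.filter (fun k => i ∈ B k),
    ∑ R ∈ ((univ : Finset (Fin m)).erase k).powerset,
      ∑ S ∈ ((B k).erase i).powerset,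
        ((R.card.factorial * (m - R.card - 1).factorial : ℝ) / m.factorial) *
          ((S.card.factorial * ((B k).card - S.card - 1).factorial : ℝ) /
            (B k).card.factorial) *
          (v (R.biUnion B ∪ S ∪ {i}) - v (R.biUnion B ∪ S))

/-- The Diversity Owen value: `DOw (N,v,𝓑,d) = Ow (N, v^d, 𝓑)`. -/
noncomputable def DOw (G : DivGame) : ℕ → ℝ :=
  Owen G.m (restrictedGame G) G.B

/-- The game on the same `(N, 𝓑, d)` with characteristic function `v`. -/
def gameWith (G : DivGame) (v : Finset ℕ → ℝ) : DivGame := { G with v := v }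

/-- The induced subgame `(N \ {i}, v|_{N\{i}}, 𝓑|_{N\{i}}, d)` obtained by removing player `i`. -/
def dropPlayer (G : DivGame) (i : ℕ) : DivGame :=
  { G with N := G.N.erase i, B := fun k => (G.B k).erase i }

/-- Player `i` is null in `v` (on player set `N`): `v (S ∪ {i}) = v S` for all `S ⊆ N \ {i}`. -/
def NullPlayerIn (v : Finset ℕ → ℝ) (N : Finset ℕ) (i : ℕ) : Prop :=
  ∀ S ⊆ N.erase i, v (insert i S) = v S

/-- Players `i` and `j` are symmetric in `v` (on player set `N`). -/
def SymmetricIn (v : Finset ℕ → ℝ) (N : Finset ℕ) (i j : ℕ) : Prop :=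
  ∀ S ⊆ N \ {i, j}, v (insert i S) - v S = v (insert j S) - v S

/-- The game is diverse: `v S ≠ 0` implies `S` is a diverse coalition. -/
def IsDiverseGame (G : DivGame) : Prop :=
  ∀ S ⊆ G.N, G.v S ≠ 0 → DiverseCoal G S

/-- Player `i` is an out player: `i ∈ B k` with `|B k| - d k ≥ 1`. -/
def OutPlayer (G : DivGame) (i : ℕ) : Prop :=
  ∃ k, i ∈ G.B k ∧ G.d k < (G.B k).card

/-- The game is `i`-out diverse: diverse and `i` is an out player. -/
def IOutDiverse (G : DivGame) (i : ℕ) : Prop :=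
  IsDiverseGame G ∧ OutPlayer G i

/-- A value on `GD`. -/
abbrev Value := DivGame → ℕ → ℝ

/-- Efficiency (E). -/
def Efficiency (f : Value) : Prop :=
  ∀ G, IsGD G → ∑ i ∈ G.N, f G i = G.v G.N

/-- Null Player Out for Preserving-Diversity Games (NPOPD). -/
def NPOPD (f : Value) : Prop :=
  ∀ G, IsGD G → ∀ i, IOutDiverse G i → NullPlayerIn G.v G.N i →
    ∀ j ∈ G.N.erase i, f G j = f (dropPlayer G i) j

/-- Fairness within Component (FwC). -/
def FwC (f : Value) : Prop :=
  ∀ G : DivGame, ∀ v w : Finset ℕ → ℝ,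
    IsGD (gameWith G v) → IsGD (gameWith G w) →
    ∀ p : Fin G.m, ∀ i ∈ G.B p, ∀ j ∈ G.B p, SymmetricIn v G.N i j →
      f (gameWith G (v + w)) i - f (gameWith G w) i =
        f (gameWith G (v + w)) j - f (gameWith G w) j

/-- Fairness through Diversity (FD). -/
def FD (f : Value) : Prop :=
  ∀ G : DivGame, ∀ v w : Finset ℕ → ℝ,
    IsGD (gameWith G v) → IsGD (gameWith G w) →
    ∀ p q : Fin G.m,
      (∑ i ∈ G.B p, f (gameWith G (v + w)) i) - (∑ i ∈ G.B p, f (gameWith G w) i) =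
        (∑ i ∈ G.B q, f (gameWith G (v + w)) i) - (∑ i ∈ G.B q, f (gameWith G w) i)

/-- Independence from Non-Diverse Coalitions (INDC). -/
def INDC (f : Value) : Prop :=
  ∀ G : DivGame, ∀ v w : Finset ℕ → ℝ,
    IsGD (gameWith G v) → IsGD (gameWith G w) →
    (∀ S ⊆ G.N, DiverseCoal G S → v S = w S) →
    ∀ i ∈ G.N, f (gameWith G v) i = f (gameWith G w) i

/-- Equality through diversity (ED). -/
def ED (f : Value) : Prop :=
  ∀ G, IsGD G → ∀ k q : Fin G.m, ∑ i ∈ G.B k, f G i = ∑ i ∈ G.B q, f G i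

/-- Null Player for Diverse Games (ND). -/
def ND (f : Value) : Prop :=
  ∀ G, IsGD G → IsDiverseGame G → ∀ i ∈ G.N, NullPlayerIn G.v G.N i → f G i = 0

/-- Intra-coalitional balanced contributions with out players for preserving
diversity (IBCOPPD). -/
def IBCOPPD (f : Value) : Prop :=
  ∀ G, IsGD G → IsDiverseGame G →
    ∀ p : Fin G.m, ∀ i ∈ G.B p, ∀ j ∈ G.B p, i ≠ j → G.d p < (G.B p).card →
      (f G i - f (dropPlayer G j) i = f G j - f (dropPlayer G i) j) ∧
      (NullPlayerIn (dropPlayer G j).v (dropPlayer G j).N i → f (dropPlayer G j) i = 0) ∧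
      (NullPlayerIn (dropPlayer G i).v (dropPlayer G i).N j → f (dropPlayer G i) j = 0)

/-- Weak intra-coalitional balanced contributions with out players for preserving
diversity (IBCOPPD⁻). -/
def IBCOPPDweak (f : Value) : Prop :=
  (∀ G, IsGD G → IsDiverseGame G →
    ∀ p : Fin G.m, ∀ i ∈ G.B p, ∀ j ∈ G.B p, i ≠ j → G.d p < (G.B p).card →
      f G i - f (dropPlayer G j) i = f G j - f (dropPlayer G i) j) ∧
  (∀ G, IsGD G → G.v = (fun _ => 0) → ∀ k ∈ G.N, f G k = 0)

/-- The extended game `(N ∪ {l}, (v)₊ₗ, 𝓑₊ₗ, d)` obtained by adding an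
outside player `l` to the component `B k`. -/
def addPlayer (G : DivGame) (k : Fin G.m) (l : ℕ) : DivGame :=
  { m := G.m
    N := insert l G.N
    v := fun S => G.v (S.erase l)
    B := fun k' => if k' = k then insert l (G.B k) else G.B k'
    d := G.d }

lemma myUnionSingleton (s : Finset ℕ) (a : ℕ) : s ∪ {a} = insert a s := by
  ext x; simp [or_comm]

lemma restricted_gameWith (G : DivGame) (v : Finset ℕ → ℝ) (S : Finset ℕ) :
    restrictedGame (gameWith G v) S = if DiverseCoal G S then v S else 0 := rfl

lemma Owen_add (m : ℕ) (a b : Finset ℕ → ℝ) (B : Fin m → Finset ℕ) (i : ℕ) :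
    Owen m (fun S => a S + b S) B i = Owen m a B i + Owen m b B i := by
  unfold Owen
  rw [← Finset.sum_add_distrib]
  refine Finset.sum_congr rfl fun k _ => ?_
  rw [← Finset.sum_add_distrib]
  refine Finset.sum_congr rfl fun R _ => ?_
  rw [← Finset.sum_add_distrib]
  refine Finset.sum_congr rfl fun S _ => ?_
  ring

/-- the Diversity Owen value satisfies Fairness within Component. -/
theorem dow_fwc : FwC DOw := by
  intro G v w hv hw p i hi j hj hsym
  by_cases hij : i = j
  · subst hij; rfl
  -- linearity reduction
  have hlin : ∀ x : ℕ, DOw (gameWith G (v + w)) x - DOw (gameWith G w) x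
      = Owen G.m (restrictedGame (gameWith G v)) G.B x := by
    intro x
    have hres : restrictedGame (gameWith G (v + w)) =
        fun S => restrictedGame (gameWith G v) S + restrictedGame (gameWith G w) S := by
      funext S
      simp only [restricted_gameWith, Pi.add_apply]
      by_cases h : DiverseCoal G S <;> simp [h]
    show Owen G.m (restrictedGame (gameWith G (v + w))) G.B x
        - Owen G.m (restrictedGame (gameWith G w)) G.B x = _
    rw [hres, Owen_add]; ring
  rw [hlin i, hlin j]
  set u := restrictedGame (gameWith G v) with hu
  have hNsub : ∀ k, G.B k ⊆ G.N := hv.2.1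
  have huq : ∀ x ∈ G.N, ∃! k, x ∈ G.B k := hv.2.2.1
  have hiN : i ∈ G.N := hNsub p hi
  have hjN : j ∈ G.N := hNsub p hj
  have hip : ∀ k, i ∈ G.B k → k = p := fun k hk => (huq i hiN).unique hk hi
  have hjp : ∀ k, j ∈ G.B k → k = p := fun k hk => (huq j hjN).unique hk hj
  -- key symmetry fact for u
  have hkey : ∀ T ⊆ G.N \ {i, j}, u (insert i T) = u (insert j T) := by
    intro T hT
    have hiT : i ∉ T := fun h => by
      have := hT h; rw [Finset.mem_sdiff] at this; exact this.2 (by simp)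
    have hjT : j ∉ T := fun h => by
      have := hT h; rw [Finset.mem_sdiff] at this; exact this.2 (by simp)
    have hTN : T ⊆ G.N := fun x hx => (Finset.mem_sdiff.mp (hT hx)).1
    have hcard : ∀ k, ((insert i T) ∩ G.B k).card = ((insert j T) ∩ G.B k).card := by
      intro k
      by_cases hk : k = p
      · subst hk
        rw [Finset.insert_inter_of_mem hi, Finset.insert_inter_of_mem hj,
          Finset.card_insert_of_notMem (fun h => hiT (Finset.mem_inter.mp h).1),
          Finset.card_insert_of_notMem (fun h => hjT (Finset.mem_inter.mp h).1)]
      · rw [Finset.insert_inter_of_notMem (fun h => hk (hip k h)),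
          Finset.insert_inter_of_notMem (fun h => hk (hjp k h))]
    have hdiv : DiverseCoal G (insert i T) ↔ DiverseCoal G (insert j T) :=
      forall_congr' fun k => by rw [hcard k]
    have hvT : v (insert i T) = v (insert j T) := by
      have := hsym T hT; linarith
    show restrictedGame (gameWith G v) _ = restrictedGame (gameWith G v) _
    rw [restricted_gameWith, restricted_gameWith]
    by_cases h : DiverseCoal G (insert i T)
    · rw [if_pos h, if_pos (hdiv.mp h)]; exact hvT
    · rw [if_neg h, if_neg (fun h' => h (hdiv.mpr h'))]
  have hfi : Finset.univ.filter (fun k => i ∈ G.B k) = {p} := by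
    ext k
    simp only [Finset.mem_filter, Finset.mem_univ, true_and, Finset.mem_singleton]
    exact ⟨hip k, fun h => h ▸ hi⟩
  have hfj : Finset.univ.filter (fun k => j ∈ G.B k) = {p} := by
    ext k
    simp only [Finset.mem_filter, Finset.mem_univ, true_and, Finset.mem_singleton]
    exact ⟨hjp k, fun h => h ▸ hj⟩
  unfold Owen
  rw [hfi, hfj, Finset.sum_singleton, Finset.sum_singleton]
  refine Finset.sum_congr rfl fun R hR => ?_
  have hpR : p ∉ R := fun h => (Finset.mem_erase.mp (Finset.mem_powerset.mp hR h)).1 rfl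
  set Q := R.biUnion G.B with hQ
  have hiQ : i ∉ Q := by
    rw [hQ, Finset.mem_biUnion]
    rintro ⟨r, hrR, hir⟩; exact hpR (hip r hir ▸ hrR)
  have hjQ : j ∉ Q := by
    rw [hQ, Finset.mem_biUnion]
    rintro ⟨r, hrR, hjr⟩; exact hpR (hjp r hjr ▸ hrR)
  have hQN : Q ⊆ G.N := Finset.biUnion_subset.mpr fun r _ => hNsub r
  refine Finset.sum_nbij' (fun S => if j ∈ S then insert i (S.erase j) else S)
    (fun S => if i ∈ S then insert j (S.erase i) else S) ?_ ?_ ?_ ?_ ?_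
  · -- maps into target powerset
    intro S hS
    rw [Finset.mem_powerset] at hS ⊢
    have hSi : i ∉ S := fun h => (Finset.mem_erase.mp (hS h)).1 rfl
    have hSB : S ⊆ G.B p := fun x hx => (Finset.mem_erase.mp (hS hx)).2
    by_cases hjS : j ∈ S
    · rw [if_pos hjS]
      intro x hx
      rcases Finset.mem_insert.mp hx with rfl | hx
      · exact Finset.mem_erase.mpr ⟨hij, hi⟩
      · exact Finset.mem_erase.mpr ⟨fun h => (Finset.mem_erase.mp hx).1 (h ▸ rfl),
          hSB (Finset.mem_of_mem_erase hx)⟩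
    · rw [if_neg hjS]
      exact fun x hx => Finset.mem_erase.mpr ⟨fun h => hjS (h ▸ hx), hSB hx⟩
  · intro S hS
    rw [Finset.mem_powerset] at hS ⊢
    have hSj : j ∉ S := fun h => (Finset.mem_erase.mp (hS h)).1 rfl
    have hSB : S ⊆ G.B p := fun x hx => (Finset.mem_erase.mp (hS hx)).2
    by_cases hiS : i ∈ S
    · rw [if_pos hiS]
      intro x hx
      rcases Finset.mem_insert.mp hx with rfl | hx
      · exact Finset.mem_erase.mpr ⟨Ne.symm hij, hj⟩
      · exact Finset.mem_erase.mpr ⟨fun h => (Finset.mem_erase.mp hx).1 (h ▸ rfl),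
          hSB (Finset.mem_of_mem_erase hx)⟩
    · rw [if_neg hiS]
      exact fun x hx => Finset.mem_erase.mpr ⟨fun h => hiS (h ▸ hx), hSB hx⟩
  · -- left inverse
    intro S hS
    rw [Finset.mem_powerset] at hS
    have hSi : i ∉ S := fun h => (Finset.mem_erase.mp (hS h)).1 rfl
    by_cases hjS : j ∈ S
    · rw [if_pos hjS, if_pos (Finset.mem_insert_self i _),
        Finset.erase_insert (fun h => hSi (Finset.mem_of_mem_erase h)),
        Finset.insert_erase hjS]
    · rw [if_neg hjS, if_neg hSi]
  · intro S hS
    rw [Finset.mem_powerset] at hS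
    have hSj : j ∉ S := fun h => (Finset.mem_erase.mp (hS h)).1 rfl
    by_cases hiS : i ∈ S
    · rw [if_pos hiS, if_pos (Finset.mem_insert_self j _),
        Finset.erase_insert (fun h => hSj (Finset.mem_of_mem_erase h)),
        Finset.insert_erase hiS]
    · rw [if_neg hiS, if_neg hSj]
  · -- the terms agree
    intro S hS
    rw [Finset.mem_powerset] at hS
    have hSi : i ∉ S := fun h => (Finset.mem_erase.mp (hS h)).1 rfl
    have hSB : S ⊆ G.B p := fun x hx => (Finset.mem_erase.mp (hS hx)).2
    have hSN : S ⊆ G.N := hSB.trans (hNsub p)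
    by_cases hjS : j ∈ S
    · rw [if_pos hjS]
      set T := Q ∪ S.erase j with hT
      have hiT : i ∉ T := by
        rw [hT, Finset.mem_union]
        rintro (h | h); exact hiQ h; exact hSi (Finset.mem_of_mem_erase h)
      have hjT : j ∉ T := by
        rw [hT, Finset.mem_union]
        rintro (h | h); exact hjQ h; exact (Finset.mem_erase.mp h).1 rfl
      have hTsub : T ⊆ G.N \ {i, j} := by
        intro x hx
        rw [Finset.mem_sdiff]
        refine ⟨?_, ?_⟩
        · rcases Finset.mem_union.mp hx with h | h
          · exact hQN h
          · exact hSN (Finset.mem_of_mem_erase h)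
        · intro hm
          rcases Finset.mem_insert.mp hm with rfl | hm
          · exact hiT hx
          · exact hjT (Finset.mem_singleton.mp hm ▸ hx)
      have e1 : Q ∪ S = insert j T := by
        rw [hT, ← Finset.union_insert, Finset.insert_erase hjS]
      have e2 : Q ∪ insert i (S.erase j) = insert i T := by
        rw [hT, ← Finset.union_insert]
      have e3 : Q ∪ S ∪ {i} = Q ∪ insert i (S.erase j) ∪ {j} := by
        rw [e1, e2, myUnionSingleton, myUnionSingleton, Finset.insert_comm]
      have hcard : (insert i (S.erase j)).card = S.card := by
        rw [Finset.card_insert_of_notMem (fun h => hSi (Finset.mem_of_mem_erase h)),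
          Finset.card_erase_add_one hjS]
      rw [hcard, e3, e1, e2, ← hkey T hTsub]
    · rw [if_neg hjS]
      have e1 : Q ∪ S ∪ {i} = insert i (Q ∪ S) := myUnionSingleton _ _
      have e2 : Q ∪ S ∪ {j} = insert j (Q ∪ S) := myUnionSingleton _ _
      have hsub : Q ∪ S ⊆ G.N \ {i, j} := by
        intro x hx
        rw [Finset.mem_sdiff]
        refine ⟨?_, ?_⟩
        · rcases Finset.mem_union.mp hx with h | h
          · exact hQN h
          · exact hSN h
        · intro hm
          rcases Finset.mem_insert.mp hm with rfl | hm
          · rcases Finset.mem_union.mp hx with h | h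
            · exact hiQ h
            · exact hSi h
          · rw [Finset.mem_singleton.mp hm] at hx
            rcases Finset.mem_union.mp hx with h | h
            · exact hjQ h
            · exact hjS h
      rw [e1, e2, hkey _ hsub]
end

section
/- The Diversity Owen value satisfies Fairness through Diversity: for TU-games with diversity constraints (N,v,B,d) and (N,w,B,d) and any components B_p, B_q of B, Σ_{i∈B_p} DOw_i(N,v+w,B,d) − Σ_{i∈B_p} DOw_i(N,w,B,d) = Σ_{i∈B_q} DOw_i(N,v+w,B,d) − Σ_{i∈B_q} DOw_i(N,w,B,d). -/
open Finset
open scoped Classical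

noncomputable def shapCoef (t s : ℕ) : ℝ :=
  (s.factorial : ℝ) * ((t - s - 1).factorial : ℝ) / (t.factorial : ℝ)

lemma shapCoef_pred {t a : ℕ} (h1 : 1 ≤ a) (h2 : a ≤ t) :
    (a : ℝ) * shapCoef t (a - 1)
      = (a.factorial : ℝ) * ((t - a).factorial : ℝ) / (t.factorial : ℝ) := by
  have h : (a : ℝ) * ((a - 1).factorial : ℝ) = (a.factorial : ℝ) := by
    exact_mod_cast Nat.mul_factorial_pred (by omega : a ≠ 0)
  unfold shapCoef
  rw [show t - (a - 1) - 1 = t - a from by omega, ← h]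
  ring

lemma shapCoef_sub {t a : ℕ} (h2 : a < t) :
    ((t - a : ℕ) : ℝ) * shapCoef t a
      = (a.factorial : ℝ) * ((t - a).factorial : ℝ) / (t.factorial : ℝ) := by
  have h : ((t - a : ℕ) : ℝ) * ((t - a - 1).factorial : ℝ) = ((t - a).factorial : ℝ) := by
    exact_mod_cast Nat.mul_factorial_pred (by omega : t - a ≠ 0)
  unfold shapCoef
  rw [← h]
  ring

lemma shapCoef_top {t : ℕ} (h : 1 ≤ t) : (t : ℝ) * shapCoef t (t - 1) = 1 := by
  have h0 : (t.factorial : ℝ) ≠ 0 := by exact_mod_cast t.factorial_ne_zero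
  rw [shapCoef_pred h le_rfl, Nat.sub_self, Nat.factorial_zero, Nat.cast_one, mul_one,
    div_self h0]

lemma shapCoef_bot {t : ℕ} (h : 1 ≤ t) : (t : ℝ) * shapCoef t 0 = 1 := by
  have h0 : (t.factorial : ℝ) ≠ 0 := by exact_mod_cast t.factorial_ne_zero
  have hh : (t : ℝ) * ((t - 1).factorial : ℝ) = (t.factorial : ℝ) := by
    exact_mod_cast Nat.mul_factorial_pred (by omega : t ≠ 0)
  unfold shapCoef
  rw [Nat.sub_zero, Nat.factorial_zero, Nat.cast_one, one_mul, ← mul_div_assoc, hh,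
    div_self h0]

lemma shapley_core (T : Finset ℕ) (g : Finset ℕ → ℝ) :
    ∑ i ∈ T, ∑ S ∈ (T.erase i).powerset, shapCoef T.card S.card * (g (S ∪ {i}) - g S)
      = g T - g ∅ := by
  rcases T.eq_empty_or_nonempty with rfl | hT
  · simp
  have ht1 : 1 ≤ T.card := Finset.card_pos.mpr hT
  have swap : (∑ i ∈ T, ∑ S ∈ (T.erase i).powerset,
        shapCoef T.card S.card * (g (S ∪ {i}) - g S))
      = ∑ S ∈ T.powerset, ∑ i ∈ T \ S, shapCoef T.card S.card * (g (S ∪ {i}) - g S) := by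
    refine Finset.sum_comm' ?_
    intro i S
    simp only [Finset.mem_powerset, Finset.mem_sdiff, Finset.subset_erase]
    tauto
  rw [swap]
  have reindex : (∑ S ∈ T.powerset, ∑ i ∈ T \ S, shapCoef T.card S.card * g (S ∪ {i}))
      = ∑ A ∈ T.powerset, ∑ i ∈ A, shapCoef T.card (A.card - 1) * g A := by
    rw [Finset.sum_sigma' T.powerset (fun S => T \ S)
        (fun S i => shapCoef T.card S.card * g (S ∪ {i})),
      Finset.sum_sigma' T.powerset (fun A => (A : Finset ℕ))
        (fun A i => shapCoef T.card (A.card - 1) * g A)]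
    refine Finset.sum_nbij' (fun z => ⟨insert z.2 z.1, z.2⟩) (fun z => ⟨z.1.erase z.2, z.2⟩)
      ?_ ?_ ?_ ?_ ?_
    · rintro ⟨S, i⟩ hz
      simp only [Finset.mem_sigma, Finset.mem_powerset, Finset.mem_sdiff] at hz ⊢
      exact ⟨Finset.insert_subset hz.2.1 hz.1, Finset.mem_insert_self _ _⟩
    · rintro ⟨A, i⟩ hz
      simp only [Finset.mem_sigma, Finset.mem_powerset, Finset.mem_sdiff] at hz ⊢
      exact ⟨(Finset.erase_subset _ _).trans hz.1, hz.1 hz.2, Finset.notMem_erase _ _⟩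
    · rintro ⟨S, i⟩ hz
      simp only [Finset.mem_sigma, Finset.mem_powerset, Finset.mem_sdiff] at hz
      have : (insert i S).erase i = S := Finset.erase_insert hz.2.2
      simp [this]
    · rintro ⟨A, i⟩ hz
      simp only [Finset.mem_sigma, Finset.mem_powerset] at hz
      have : insert i (A.erase i) = A := Finset.insert_erase hz.2
      simp [this]
    · rintro ⟨S, i⟩ hz
      simp only [Finset.mem_sigma, Finset.mem_powerset, Finset.mem_sdiff] at hz
      dsimp only
      rw [show S ∪ {i} = insert i S from by rw [Finset.insert_eq, Finset.union_comm],
        Finset.card_insert_of_notMem hz.2.2, Nat.add_sub_cancel]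
  have step2 : ∀ S ∈ T.powerset,
      (∑ i ∈ T \ S, shapCoef T.card S.card * (g (S ∪ {i}) - g S))
        = (∑ i ∈ T \ S, shapCoef T.card S.card * g (S ∪ {i}))
          - ((T.card - S.card : ℕ) : ℝ) * (shapCoef T.card S.card * g S) := by
    intro S hS
    simp only [mul_sub]
    rw [Finset.sum_sub_distrib, Finset.sum_const,
      Finset.card_sdiff_of_subset (Finset.mem_powerset.mp hS), nsmul_eq_mul]
  rw [Finset.sum_congr rfl step2, Finset.sum_sub_distrib, reindex]
  have step3 : ∀ A ∈ T.powerset,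
      (∑ i ∈ A, shapCoef T.card (A.card - 1) * g A)
        = (A.card : ℝ) * (shapCoef T.card (A.card - 1) * g A) := by
    intro A hA
    rw [Finset.sum_const, nsmul_eq_mul]
  rw [Finset.sum_congr rfl step3, ← Finset.sum_sub_distrib]
  have pointwise : ∀ A ∈ T.powerset,
      (A.card : ℝ) * (shapCoef T.card (A.card - 1) * g A)
        - ((T.card - A.card : ℕ) : ℝ) * (shapCoef T.card A.card * g A)
      = (if T = A then g T else 0) + (if ∅ = A then -g ∅ else 0) := by
    intro A hA
    have hAT : A ⊆ T := Finset.mem_powerset.mp hA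
    by_cases h1 : A = T
    · subst h1
      rw [if_pos rfl, if_neg (fun h => hT.ne_empty h.symm), Nat.sub_self, Nat.cast_zero,
        zero_mul, sub_zero, ← mul_assoc, shapCoef_top ht1, one_mul, add_zero]
    · by_cases h2 : A = ∅
      · subst h2
        rw [if_neg (fun h => h1 h.symm), if_pos rfl, Finset.card_empty, Nat.cast_zero,
          zero_mul, zero_sub, Nat.sub_zero, ← mul_assoc, shapCoef_bot ht1, one_mul,
          zero_add]
      · have ha1 : 1 ≤ A.card := Finset.card_pos.mpr (Finset.nonempty_of_ne_empty h2)
        have ha2 : A.card < T.card := Finset.card_lt_card (lt_of_le_of_ne hAT h1)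
        rw [if_neg (fun h => h1 h.symm), if_neg (fun h => h2 h.symm), add_zero,
          ← mul_assoc, ← mul_assoc, shapCoef_pred ha1 (le_of_lt ha2), shapCoef_sub ha2,
          sub_self]
  rw [Finset.sum_congr rfl pointwise, Finset.sum_add_distrib, Finset.sum_ite_eq,
    Finset.sum_ite_eq, if_pos (Finset.mem_powerset_self T), if_pos (Finset.empty_mem_powerset T)]
  ring

lemma shapley_eff (T : Finset ℕ) (g : Finset ℕ → ℝ) :
    ∑ i ∈ T, ∑ S ∈ (T.erase i).powerset,
      ((S.card.factorial * (T.card - S.card - 1).factorial : ℝ) / T.card.factorial) *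
        (g (S ∪ {i}) - g S) = g T - g ∅ := by
  rw [← shapley_core T g]
  refine Finset.sum_congr rfl fun i _ => Finset.sum_congr rfl fun S _ => ?_
  simp only [shapCoef]


lemma dow_sum_component (G : DivGame) (hG : IsGD G) (p : Fin G.m) :
    ∑ i ∈ G.B p, DOw G i
      = (((G.m - 1).factorial * (G.m - (G.m - 1) - 1).factorial : ℝ) / G.m.factorial)
          * restrictedGame G G.N := by
  obtain ⟨hv0, hBN, huniq, hd⟩ := hG
  have hm : 0 < G.m := p.pos
  have hdisj : ∀ (k k' : Fin G.m), k ≠ k' → ∀ x ∈ G.B k, x ∉ G.B k' := by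
    intro k k' hkk' x hx hx'
    obtain ⟨c, -, hcu⟩ := huniq x (hBN k hx)
    exact hkk' ((hcu k hx).trans (hcu k' hx').symm)
  have hmiss : ∀ (k' : Fin G.m) (S : Finset ℕ), S ∩ G.B k' = ∅ → restrictedGame G S = 0 := by
    intro k' S hSk
    have hnd : ¬ DiverseCoal G S := by
      intro hdiv
      have h1 := hdiv k'
      rw [hSk] at h1
      simp only [Finset.card_empty, Nat.le_zero] at h1
      have := (hd k').1
      omega
    simp [restrictedGame, hnd]
  have hQBp : ∀ x ∈ (Finset.univ.erase p).biUnion G.B, x ∉ G.B p := by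
    intro x hx
    obtain ⟨r, hr, hxr⟩ := Finset.mem_biUnion.mp hx
    exact hdisj r p (Finset.ne_of_mem_erase hr) x hxr
  have hQN : (Finset.univ.erase p).biUnion G.B ∪ G.B p = G.N := by
    apply Finset.Subset.antisymm
    · intro x hx
      rcases Finset.mem_union.mp hx with hx | hx
      · obtain ⟨r, -, hxr⟩ := Finset.mem_biUnion.mp hx
        exact hBN r hxr
      · exact hBN p hx
    · intro x hx
      obtain ⟨k, hk, -⟩ := huniq x hx
      rcases eq_or_ne k p with rfl | hkp
      · exact Finset.mem_union_right _ hk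
      · exact Finset.mem_union_left _
          (Finset.mem_biUnion.mpr ⟨k, Finset.mem_erase.mpr ⟨hkp, Finset.mem_univ k⟩, hk⟩)
  have hDOw : ∀ i ∈ G.B p, DOw G i
      = ∑ S ∈ ((G.B p).erase i).powerset,
          (((G.m - 1).factorial * (G.m - (G.m - 1) - 1).factorial : ℝ) / G.m.factorial) *
            (((S.card.factorial * ((G.B p).card - S.card - 1).factorial : ℝ) /
                (G.B p).card.factorial) *
              ((fun A => restrictedGame G ((Finset.univ.erase p).biUnion G.B ∪ A)) (S ∪ {i})
                - (fun A => restrictedGame G ((Finset.univ.erase p).biUnion G.B ∪ A)) S)) := by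
    intro i hip
    have hfilter : Finset.univ.filter (fun k => i ∈ G.B k) = {p} := by
      apply Finset.eq_singleton_iff_unique_mem.mpr
      refine ⟨Finset.mem_filter.mpr ⟨Finset.mem_univ p, hip⟩, ?_⟩
      intro k hk
      have hk' : i ∈ G.B k := (Finset.mem_filter.mp hk).2
      obtain ⟨c, -, hcu⟩ := huniq i (hBN p hip)
      exact (hcu k hk').trans (hcu p hip).symm
    unfold DOw Owen
    rw [hfilter, Finset.sum_singleton]
    rw [Finset.sum_eq_single_of_mem (Finset.univ.erase p) (Finset.mem_powerset_self _) ?side]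
    case side =>
      intro R hRp hRne
      apply Finset.sum_eq_zero
      intro S hS
      obtain ⟨k', hk'mem, hk'R⟩ :=
        Finset.exists_of_ssubset (lt_of_le_of_ne (Finset.mem_powerset.mp hRp) hRne)
      have hk'p : k' ≠ p := Finset.ne_of_mem_erase hk'mem
      have hSp : S ⊆ G.B p := (Finset.mem_powerset.mp hS).trans (Finset.erase_subset _ _)
      have hdis : ∀ x ∈ R.biUnion G.B ∪ S ∪ {i}, x ∉ G.B k' := by
        intro x hx hxk'
        rcases Finset.mem_union.mp hx with hx | hx
        · rcases Finset.mem_union.mp hx with hx | hx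
          · obtain ⟨r, hr, hxr⟩ := Finset.mem_biUnion.mp hx
            have hrk' : r ≠ k' := fun h => hk'R (h ▸ hr)
            exact hdisj r k' hrk' x hxr hxk'
          · exact hdisj p k' (Ne.symm hk'p) x (hSp hx) hxk'
        · rw [Finset.mem_singleton.mp hx] at hxk'
          exact hdisj p k' (Ne.symm hk'p) i hip hxk'
      have h1 : (R.biUnion G.B ∪ S ∪ {i}) ∩ G.B k' = ∅ := by
        apply Finset.eq_empty_of_forall_notMem
        intro x hx
        exact hdis x (Finset.mem_inter.mp hx).1 (Finset.mem_inter.mp hx).2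
      have h2 : (R.biUnion G.B ∪ S) ∩ G.B k' = ∅ := by
        apply Finset.eq_empty_of_forall_notMem
        intro x hx
        have hx1 := (Finset.mem_inter.mp hx).1
        exact hdis x (Finset.mem_union_left _ hx1) (Finset.mem_inter.mp hx).2
      rw [hmiss k' _ h1, hmiss k' _ h2, sub_self, mul_zero]
    have hcard : (Finset.univ.erase p).card = G.m - 1 := by
      rw [Finset.card_erase_of_mem (Finset.mem_univ p), Finset.card_univ, Fintype.card_fin]
    rw [hcard]
    refine Finset.sum_congr rfl fun S hS => ?_
    dsimp only
    rw [Finset.union_assoc]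
    ring
  have hshap := shapley_eff (G.B p)
      (fun A => restrictedGame G ((Finset.univ.erase p).biUnion G.B ∪ A))
  rw [Finset.sum_congr rfl hDOw]
  dsimp only
  simp only [← Finset.mul_sum]
  rw [hshap]
  rw [Finset.union_empty,
    hmiss p _ (Finset.eq_empty_of_forall_notMem fun x hx =>
      hQBp x (Finset.mem_inter.mp hx).1 (Finset.mem_inter.mp hx).2),
    hQN, sub_zero]

lemma owen_add (m : ℕ) (u u' : Finset ℕ → ℝ) (B : Fin m → Finset ℕ) (i : ℕ) :
    Owen m (fun S => u S + u' S) B i = Owen m u B i + Owen m u' B i := by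
  unfold Owen
  rw [← Finset.sum_add_distrib]
  refine Finset.sum_congr rfl fun k _ => ?_
  rw [← Finset.sum_add_distrib]
  refine Finset.sum_congr rfl fun R _ => ?_
  rw [← Finset.sum_add_distrib]
  refine Finset.sum_congr rfl fun S _ => ?_
  ring

/-- the Diversity Owen value satisfies Fairness through Diversity. -/
theorem dow_fd : FD DOw := by
  intro G v w hv hw p q
  have hrg : ∀ (v' : Finset ℕ → ℝ) (S : Finset ℕ),
      restrictedGame (gameWith G v') S = if DiverseCoal G S then v' S else 0 := fun v' S => rfl
  have hadd : ∀ i, DOw (gameWith G (v + w)) i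
      = DOw (gameWith G v) i + DOw (gameWith G w) i := by
    intro i
    have hres : restrictedGame (gameWith G (v + w))
        = fun S => restrictedGame (gameWith G v) S + restrictedGame (gameWith G w) S := by
      funext S
      rw [hrg, hrg, hrg]
      by_cases h : DiverseCoal G S
      · simp [h]
      · simp [h]
    show Owen G.m (restrictedGame (gameWith G (v + w))) G.B i = _
    rw [hres]
    exact owen_add G.m _ _ G.B i
  have h1 : (∑ i ∈ G.B p, DOw (gameWith G v) i)
      = (((G.m - 1).factorial * (G.m - (G.m - 1) - 1).factorial : ℝ) / G.m.factorial)
          * restrictedGame (gameWith G v) G.N := dow_sum_component (gameWith G v) hv p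
  have h2 : (∑ i ∈ G.B q, DOw (gameWith G v) i)
      = (((G.m - 1).factorial * (G.m - (G.m - 1) - 1).factorial : ℝ) / G.m.factorial)
          * restrictedGame (gameWith G v) G.N := dow_sum_component (gameWith G v) hv q
  simp only [hadd, Finset.sum_add_distrib]
  have := h1.trans h2.symm
  linarith
end

section
/- The Diversity Owen value satisfies Null Player Out for Preserving-Diversity Games: if the TU-game with diversity constraints (N,v,B,d) is i-out diverse and player i is null in v, then DOw_j(N,v,B,d) = DOw_j(N\{i}, v|_{N\{i}}, B|_{N\{i}}, d) for every j ∈ N\{i}. -/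
open Finset
open scoped Classical

lemma fact_id (s t : ℕ) :
    (s.factorial * (t+1).factorial + (s+1).factorial * t.factorial) * (s+t+1).factorial
      = s.factorial * t.factorial * (s+t+2).factorial := by
  rw [Nat.factorial_succ t, Nat.factorial_succ s,
    show (s+t+2) = (s+t+1)+1 by ring, Nat.factorial_succ (s+t+1)]
  ring

lemma weight_id (s t : ℕ) :
    ((s.factorial * (s + t + 2 - s - 1).factorial : ℝ) / (s + t + 2).factorial)
      + (((s+1).factorial * ((s + t + 2) - (s+1) - 1).factorial : ℝ) / (s + t + 2).factorial)
      = (s.factorial * ((s + t + 1) - s - 1).factorial : ℝ) / (s + t + 1).factorial := by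
  have e1 : s + t + 2 - s - 1 = t + 1 := by omega
  have e2 : s + t + 2 - (s+1) - 1 = t := by omega
  have e3 : s + t + 1 - s - 1 = t := by omega
  rw [e1, e2, e3, ← add_div]
  have h1 : ((s + t + 2).factorial : ℝ) ≠ 0 := Nat.cast_ne_zero.2 (Nat.factorial_ne_zero _)
  have h2 : ((s + t + 1).factorial : ℝ) ≠ 0 := Nat.cast_ne_zero.2 (Nat.factorial_ne_zero _)
  rw [div_eq_div_iff h1 h2]
  have := congrArg (fun n : ℕ => (n : ℝ)) (fact_id s t)
  push_cast at this ⊢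
  linear_combination this

/-- the Diversity Owen value satisfies Null Player Out for
Preserving-Diversity Games. -/
theorem dow_npopd : NPOPD DOw := by
  intro G hGD i hiod hnull j hj
  obtain ⟨hv0, hBN, huniq, hd⟩ := hGD
  obtain ⟨hdiv, k0, hik0, hdk0⟩ := hiod
  rw [mem_erase] at hj
  obtain ⟨hji, hjN⟩ := hj
  have hiN : i ∈ G.N := hBN k0 hik0
  obtain ⟨ki, hki, hkiu⟩ := huniq i hiN
  have hk0u : ∀ k, i ∈ G.B k → k = k0 := fun k hk => by
    rw [hkiu k hk, hkiu k0 hik0]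
  -- i is null in the restricted game
  have wnull : ∀ S ⊆ G.N.erase i,
      restrictedGame G (insert i S) = restrictedGame G S := by
    intro S hS
    have hSN : S ⊆ G.N := hS.trans (erase_subset _ _)
    have hvS : G.v (insert i S) = G.v S := hnull S hS
    by_cases h1 : DiverseCoal G S
    · have h2 : DiverseCoal G (insert i S) := fun k =>
        le_trans (h1 k) (card_le_card (inter_subset_inter (subset_insert _ _) le_rfl))
      simp [restrictedGame, h1, h2, hvS]
    · by_cases h2 : DiverseCoal G (insert i S)
      · have hz : G.v S = 0 := by
          by_contra h; exact h1 (hdiv S hSN h)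
        simp [restrictedGame, h1, h2, hvS, hz]
      · simp [restrictedGame, h1, h2]
  -- restricted games agree on i-free coalitions
  have hinter : ∀ S : Finset ℕ, i ∉ S → ∀ k, S ∩ ((G.B k).erase i) = S ∩ G.B k := by
    intro S hiS k
    ext a
    simp only [mem_inter, mem_erase]
    constructor
    · rintro ⟨h1, _, h2⟩; exact ⟨h1, h2⟩
    · rintro ⟨h1, h2⟩; exact ⟨h1, ne_of_mem_of_not_mem h1 hiS, h2⟩
  have wag : ∀ S : Finset ℕ, i ∉ S →
      restrictedGame (dropPlayer G i) S = restrictedGame G S := by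
    intro S hiS
    have hiff : DiverseCoal (dropPlayer G i) S ↔ DiverseCoal G S := by
      unfold DiverseCoal dropPlayer
      simp only [hinter S hiS]
    simp only [restrictedGame]
    rw [if_congr hiff (show (dropPlayer G i).v S = G.v S from rfl) rfl]
  have wcomb : ∀ A ⊆ G.N,
      restrictedGame (dropPlayer G i) (A.erase i) = restrictedGame G A := by
    intro A hA
    rw [wag _ (notMem_erase i A)]
    by_cases hiA : i ∈ A
    · conv_rhs => rw [← insert_erase hiA]
      exact (wnull _ (erase_subset_erase i hA)).symm
    · rw [erase_eq_of_notMem hiA]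
  -- biUnion of erased components
  have hbi : ∀ R : Finset (Fin G.m),
      R.biUnion (fun r => (G.B r).erase i) = (R.biUnion G.B).erase i := by
    intro R; ext a; simp only [mem_biUnion, mem_erase]; tauto
  have herase : ∀ (Q T : Finset ℕ), i ∉ T → (Q ∪ T).erase i = Q.erase i ∪ T := by
    intro Q T hT; ext a
    simp only [mem_erase, mem_union]
    constructor
    · rintro ⟨h1, h2 | h2⟩
      · exact Or.inl ⟨h1, h2⟩
      · exact Or.inr h2
    · rintro (⟨h1, h2⟩ | h2)
      · exact ⟨h1, Or.inl h2⟩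
      · exact ⟨ne_of_mem_of_not_mem h2 hT, Or.inr h2⟩
  have hQN : ∀ R : Finset (Fin G.m), R.biUnion G.B ⊆ G.N :=
    fun R => biUnion_subset.2 fun r _ => hBN r
  have hij : i ∉ ({j} : Finset ℕ) := by simp [Ne.symm hji]
  -- main computation
  simp only [DOw, Owen, dropPlayer]
  simp only [dropPlayer] at wag wcomb
  have hfilter : (univ.filter fun k => j ∈ (G.B k).erase i) =
      (univ.filter fun k => j ∈ G.B k) := by
    apply filter_congr
    intro k _
    simp [mem_erase, hji]
  erw [hfilter]
  apply sum_congr rfl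
  intro k hk
  rw [mem_filter] at hk
  have hjk : j ∈ G.B k := hk.2
  by_cases hkk0 : k = k0
  · -- component containing i
    subst hkk0
    apply sum_congr rfl
    intro R hR
    rw [mem_powerset] at hR
    have hiQ : i ∉ R.biUnion G.B := by
      intro h
      rw [mem_biUnion] at h
      obtain ⟨r, hrR, hir⟩ := h
      exact (mem_erase.1 (hR hrR)).1 (hk0u r hir)
    set Q := R.biUnion G.B with hQdef
    have hQ' : R.biUnion (fun r => (G.B r).erase i) = Q := by
      rw [hbi R, erase_eq_of_notMem hiQ]
    rw [hQ']
    -- set up the two S-ranges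
    have hiD : i ∈ (G.B k).erase j := mem_erase.2 ⟨Ne.symm hji, hik0⟩
    have hjBki : j ∈ (G.B k).erase i := mem_erase.2 ⟨hji, hjk⟩
    set A := ((G.B k).erase i).erase j with hAdef
    have hiA : i ∉ A := fun h => (notMem_erase i (G.B k)) (erase_subset _ _ h)
    have hAsub : A ⊆ G.N := fun x hx =>
      hBN k (mem_of_mem_erase (mem_of_mem_erase hx))
    have hDins : (G.B k).erase j = insert i A := by
      ext a
      simp only [hAdef, mem_erase, mem_insert]
      constructor
      · rintro ⟨haj, haB⟩
        by_cases hai : a = i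
        · exact Or.inl hai
        · exact Or.inr ⟨haj, hai, haB⟩
      · rintro (rfl | ⟨haj, hai, haB⟩)
        · exact ⟨Ne.symm hji, hik0⟩
        · exact ⟨haj, haB⟩
    -- marginal is invariant under adding i
    have hmarg : ∀ S ∈ A.powerset,
        restrictedGame G (Q ∪ insert i S ∪ {j}) - restrictedGame G (Q ∪ insert i S)
          = restrictedGame G (Q ∪ S ∪ {j}) - restrictedGame G (Q ∪ S) := by
      intro S hS
      rw [mem_powerset] at hS
      have hSN : S ⊆ G.N := hS.trans hAsub
      have hiS : i ∉ S := fun h => hiA (hS h)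
      have h1 : Q ∪ insert i S ∪ {j} = insert i (Q ∪ S ∪ {j}) := by
        rw [union_insert, insert_union]
      have h2 : Q ∪ insert i S = insert i (Q ∪ S) := by rw [union_insert]
      have hsub1 : Q ∪ S ∪ {j} ⊆ G.N.erase i := by
        rw [subset_erase]
        constructor
        · exact union_subset (union_subset (hQN R) hSN) (singleton_subset_iff.2 hjN)
        · simp only [mem_union, mem_singleton]
          rintro ((h | h) | h)
          · exact hiQ h
          · exact hiS h
          · exact hji h.symm
      have hsub2 : Q ∪ S ⊆ G.N.erase i := by
        rw [subset_erase]
        refine ⟨union_subset (hQN R) hSN, ?_⟩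
        simp only [mem_union]
        rintro (h | h)
        · exact hiQ h
        · exact hiS h
      rw [h1, h2, wnull _ hsub1, wnull _ hsub2]
    have hinj : ∀ x ∈ A.powerset, ∀ y ∈ A.powerset, insert i x = insert i y → x = y := by
      intro x hx y hy hxy
      have hix : i ∉ x := fun h => hiA (mem_powerset.1 hx h)
      have hiy : i ∉ y := fun h => hiA (mem_powerset.1 hy h)
      rw [← erase_insert hix, ← erase_insert hiy, hxy]
    have hdisj : Disjoint A.powerset (A.powerset.image (insert i)) := by
      rw [disjoint_left]
      intro S hS hS'
      have hiS : i ∉ S := fun h => hiA (mem_powerset.1 hS h)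
      obtain ⟨T, _, hT⟩ := mem_image.1 hS'
      exact hiS (hT ▸ mem_insert_self i T)
    rw [hDins, powerset_insert, sum_union hdisj, sum_image hinj, ← sum_add_distrib]
    apply sum_congr rfl
    intro S hS
    have hSA := mem_powerset.1 hS
    have hiS : i ∉ S := fun h => hiA (hSA h)
    have hcardins : (insert i S).card = S.card + 1 := card_insert_of_notMem hiS
    have hcardA : A.card = (G.B k).card - 2 := by
      rw [hAdef, card_erase_of_mem hjBki, card_erase_of_mem hik0]
      omega
    have hcardBk : 2 ≤ (G.B k).card := by
      have hsub : ({i, j} : Finset ℕ) ⊆ G.B k := by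
        intro a ha
        rcases mem_insert.1 ha with rfl | ha
        · exact hik0
        · exact (mem_singleton.1 ha) ▸ hjk
      have h2 : ({i, j} : Finset ℕ).card = 2 := by
        rw [card_insert_of_notMem (by simp [Ne.symm hji]), card_singleton]
      exact h2 ▸ card_le_card hsub
    have hSle : S.card ≤ (G.B k).card - 2 := hcardA ▸ card_le_card hSA
    obtain ⟨t, ht⟩ : ∃ t, (G.B k).card = S.card + t + 2 :=
      ⟨(G.B k).card - S.card - 2, by omega⟩
    have hcard' : ((G.B k).erase i).card = S.card + t + 1 := by
      rw [card_erase_of_mem hik0]; omega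
    rw [hmarg S hS]
    rw [wag (Q ∪ S ∪ {j}) (by
        simp only [mem_union, mem_singleton]
        rintro ((h | h) | h)
        · exact hiQ h
        · exact hiS h
        · exact hji h.symm)]
    rw [wag (Q ∪ S) (by
        simp only [mem_union]
        rintro (h | h)
        · exact hiQ h
        · exact hiS h)]
    rw [hcardins, ht, hcard']
    have hw := weight_id S.card t
    linear_combination
      (((R.card.factorial : ℝ) * ((G.m - R.card - 1).factorial : ℝ) / (G.m.factorial : ℝ)) *
        (restrictedGame G (Q ∪ S ∪ {j}) - restrictedGame G (Q ∪ S))) * hw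
  · -- component not containing i
    have hiBk : i ∉ G.B k := fun h => hkk0 (hk0u k h)
    have hBk' : (G.B k).erase i = G.B k := erase_eq_of_notMem hiBk
    rw [hBk']
    apply sum_congr rfl
    intro R hR
    apply sum_congr rfl
    intro S hS
    rw [mem_powerset] at hS
    have hiS : i ∉ S := fun h => hiBk (erase_subset _ _ (hS h))
    have hiSj : i ∉ S ∪ ({j} : Finset ℕ) := by
      simp only [mem_union, mem_singleton]
      rintro (h | h)
      · exact hiS h
      · exact hji h.symm
    have hSN : S ⊆ G.N := hS.trans ((erase_subset _ _).trans (hBN k))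
    have h1 : (R.biUnion G.B ∪ S ∪ {j}).erase i = (R.biUnion G.B).erase i ∪ S ∪ {j} := by
      rw [herase _ _ hij, herase _ _ hiS]
    have h2 : (R.biUnion G.B ∪ S).erase i = (R.biUnion G.B).erase i ∪ S :=
      herase _ _ hiS
    rw [hbi R, ← h1, ← h2,
      wcomb _ (union_subset (union_subset (hQN R) hSN) (singleton_subset_iff.2 hjN)),
      wcomb _ (union_subset (hQN R) hSN)]
end

section
/- The Diversity Owen value satisfies Null Player for Diverse Games: if the TU-game with diversity constraints (N,v,B,d) is diverse and player i ∈ N is null in v, then DOw_i(N,v,B,d) = 0. -/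
open Finset
open scoped Classical

/-- the Diversity Owen value satisfies Null Player for Diverse Games. -/
theorem dow_nd : ND DOw := by
  intro G hGD hDiv i hiN hNull
  obtain ⟨hv0, hBsub, hUniq, hd⟩ := hGD
  unfold DOw Owen
  apply Finset.sum_eq_zero
  intro k hk
  simp only [mem_filter] at hk
  apply Finset.sum_eq_zero
  intro R hR
  apply Finset.sum_eq_zero
  intro S hS
  simp only [mem_powerset] at hR hS
  set T := R.biUnion G.B ∪ S with hT
  have hiT : i ∉ T := by
    simp only [hT, mem_union, mem_biUnion, not_or, not_exists]
    constructor
    · rintro r ⟨hrR, hir⟩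
      have hrk : r ≠ k := (Finset.mem_erase.mp (hR hrR)).1
      obtain ⟨k', hk', huniq⟩ := hUniq i hiN
      exact hrk ((huniq r hir).trans (huniq k hk.2).symm)
    · exact fun h => (Finset.mem_erase.mp (hS h)).1 rfl
  have hTN : T ⊆ G.N := by
    intro x hx
    simp only [hT, mem_union, mem_biUnion] at hx
    rcases hx with ⟨r, _, hxr⟩ | hx
    · exact hBsub r hxr
    · exact hBsub k ((Finset.erase_subset _ _) (hS hx))
  have hTe : T ⊆ G.N.erase i := fun x hx =>
    Finset.mem_erase.mpr ⟨fun h => hiT (h ▸ hx), hTN hx⟩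
  have key : restrictedGame G (T ∪ {i}) - restrictedGame G T = 0 := by
    have hins : T ∪ {i} = insert i T := by ext x; simp [or_comm]
    rw [hins]
    unfold restrictedGame
    by_cases hdT : DiverseCoal G T
    · have hdT' : DiverseCoal G (insert i T) := fun q =>
        le_trans (hdT q) (Finset.card_le_card
          (Finset.inter_subset_inter (Finset.subset_insert _ _) (le_refl _)))
      rw [if_pos hdT, if_pos hdT', hNull T hTe, sub_self]
    · have hvT : G.v T = 0 := by
        by_contra h
        exact hdT (hDiv T hTN h)
      rw [if_neg hdT]
      split
      · rw [hNull T hTe, hvT]; ring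
      · ring
  rw [key, mul_zero]
end

section
/- The Diversity Owen value satisfies Intra-coalitional balanced contributions with out players for preserving diversity: for any diverse TU-game with diversity constraints (N,v,B,d) and any out players i,j ∈ B_p with i ≠ j, DOw_i(N,v,B,d) − DOw_i(N\{j}, v|_{N\{j}}, B|_{N\{j}}, d) = DOw_j(N,v,B,d) − DOw_j(N\{i}, v|_{N\{i}}, B|_{N\{i}}, d); moreover, if i is null in the subgame on N\{j} then DOw_i(N\{j}, v|_{N\{j}}, B|_{N\{j}}, d) = 0, and symmetrically if j is null in the subgame on N\{i} then DOw_j(N\{i}, v|_{N\{i}}, B|_{N\{i}}, d) = 0. -/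
open Finset
open scoped Classical

noncomputable def wgt (n s : ℕ) : ℝ :=
  (s.factorial * (n - s - 1).factorial : ℝ) / n.factorial

lemma wgt_add (b s : ℕ) (h : s + 2 ≤ b) : wgt b s + wgt b (s + 1) = wgt (b - 1) s := by
  obtain ⟨a, rfl⟩ : ∃ a, b = s + a + 2 := ⟨b - s - 2, by omega⟩
  simp only [wgt, show s + a + 2 - s - 1 = a + 1 from by omega,
    show s + a + 2 - (s + 1) - 1 = a from by omega,
    show s + a + 2 - 1 = s + a + 1 from by omega,
    show s + a + 1 - s - 1 = a from by omega,
    show s + a + 2 = s + a + 1 + 1 from by omega]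
  rw [Nat.factorial_succ (s + a + 1), Nat.factorial_succ a, Nat.factorial_succ s]
  have h1 : ((s + a + 1).factorial : ℝ) ≠ 0 := Nat.cast_ne_zero.mpr (Nat.factorial_pos _).ne'
  have h2 : (a.factorial : ℝ) ≠ 0 := Nat.cast_ne_zero.mpr (Nat.factorial_pos _).ne'
  have h3 : (s.factorial : ℝ) ≠ 0 := Nat.cast_ne_zero.mpr (Nat.factorial_pos _).ne'
  push_cast
  field_simp
  ring

lemma half_bc (r : Finset ℕ → ℝ) (Q C : Finset ℕ) (i j : ℕ)
    (hi : i ∈ C) (hj : j ∈ C) (hij : i ≠ j) :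
    (∑ S ∈ (C.erase i).powerset, wgt C.card S.card * (r (Q ∪ S ∪ {i}) - r (Q ∪ S)))
      - ∑ S ∈ ((C.erase i).erase j).powerset,
          wgt (C.card - 1) S.card * (r (Q ∪ S ∪ {i}) - r (Q ∪ S))
    = ∑ S ∈ ((C.erase i).erase j).powerset,
        wgt C.card (S.card + 1) *
          (r (Q ∪ (S ∪ {j}) ∪ {i}) - r (Q ∪ (S ∪ {j})) - (r (Q ∪ S ∪ {i}) - r (Q ∪ S))) := by
  set D := (C.erase i).erase j with hD
  have hjD : j ∉ D := Finset.notMem_erase j _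
  have hCi : C.erase i = insert j D := by
    rw [hD, Finset.insert_erase (Finset.mem_erase.mpr ⟨hij.symm, hj⟩)]
  have hcard : D.card = C.card - 2 := by
    rw [hD, Finset.card_erase_of_mem (Finset.mem_erase.mpr ⟨hij.symm, hj⟩),
      Finset.card_erase_of_mem hi]
    omega
  have h2C : 2 ≤ C.card := Finset.one_lt_card.mpr ⟨i, hi, j, hj, hij⟩
  rw [hCi, Finset.sum_powerset_insert hjD, ← Finset.sum_add_distrib, ← Finset.sum_sub_distrib]
  refine Finset.sum_congr rfl fun S hS => ?_
  have hSD : S ⊆ D := Finset.mem_powerset.mp hS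
  have hjS : j ∉ S := fun h => hjD (hSD h)
  have hins : insert j S = S ∪ {j} := by rw [Finset.insert_eq, Finset.union_comm]
  have hsc : (insert j S).card = S.card + 1 := Finset.card_insert_of_notMem hjS
  have hle : S.card + 2 ≤ C.card := by
    have := Finset.card_le_card hSD; omega
  rw [hsc, hins, ← wgt_add C.card S.card hle]
  ring

/-- the Diversity Owen value satisfies Intra-coalitional balanced
contributions with out players for preserving diversity. -/
theorem dow_ibcoppd : IBCOPPD DOw := by
  intro G hGD hDiv p i hi j hj hij hd
  obtain ⟨hv0, hBN, huniq, hdle⟩ := hGD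
  have hmem : ∀ x ∈ G.B p, ∀ k, x ∈ G.B k → k = p := by
    intro x hx k hk
    obtain ⟨k', -, hu⟩ := huniq x (hBN p hx)
    rw [hu k hk, hu p hx]
  have hfilt : ∀ (x : ℕ) (B' : Fin G.m → Finset ℕ), x ∈ G.B p →
      (∀ k, B' k ⊆ G.B k) → x ∈ B' p →
      (univ : Finset (Fin G.m)).filter (fun k => x ∈ B' k) = {p} := by
    intro x B' hx hsub hxp
    ext k
    simp only [mem_filter, mem_univ, true_and, mem_singleton]
    exact ⟨fun hk => hmem x hx k (hsub k hk), fun h => h ▸ hxp⟩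
  have howen : ∀ (x : ℕ) (v' : Finset ℕ → ℝ) (B' : Fin G.m → Finset ℕ),
      x ∈ G.B p → (∀ k, B' k ⊆ G.B k) → x ∈ B' p →
      Owen G.m v' B' x =
        ∑ R ∈ ((univ : Finset (Fin G.m)).erase p).powerset,
          ∑ S ∈ ((B' p).erase x).powerset,
            ((R.card.factorial * (G.m - R.card - 1).factorial : ℝ) / G.m.factorial) *
              ((S.card.factorial * ((B' p).card - S.card - 1).factorial : ℝ) /
                (B' p).card.factorial) *
              (v' (R.biUnion B' ∪ S ∪ {x}) - v' (R.biUnion B' ∪ S)) := by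
    intro x v' B' hx hsub hxp
    unfold Owen
    rw [hfilt x B' hx hsub hxp, Finset.sum_singleton]
  have hQnot : ∀ x ∈ G.B p, ∀ R : Finset (Fin G.m),
      R ⊆ (univ : Finset (Fin G.m)).erase p → x ∉ R.biUnion G.B := by
    intro x hx R hR hmemQ
    obtain ⟨k, hkR, hxk⟩ := Finset.mem_biUnion.mp hmemQ
    exact (Finset.mem_erase.mp (hR hkR)).1 (hmem x hx k hxk)
  have hQ : ∀ y ∈ G.B p, ∀ R : Finset (Fin G.m),
      R ⊆ (univ : Finset (Fin G.m)).erase p →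
      R.biUnion (fun k => (G.B k).erase y) = R.biUnion G.B := by
    intro y hy R hR
    refine Finset.biUnion_congr rfl fun k hk => ?_
    refine Finset.erase_eq_of_notMem fun hyk => ?_
    exact (Finset.mem_erase.mp (hR hk)).1 (hmem y hy k hyk)
  have hres : ∀ (y : ℕ) (X : Finset ℕ), y ∉ X →
      restrictedGame (dropPlayer G y) X = restrictedGame G X := by
    intro y X hy
    have hinter : ∀ k, X ∩ ((G.B k).erase y) = X ∩ G.B k := fun k => by
      rw [Finset.inter_erase, Finset.erase_eq_of_notMem
        (fun h => hy (Finset.mem_of_mem_inter_left h))]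
    have hdc : DiverseCoal (dropPlayer G y) X ↔ DiverseCoal G X := by
      unfold DiverseCoal
      exact forall_congr' fun k => by
        show G.d k ≤ (X ∩ (G.B k).erase y).card ↔ G.d k ≤ (X ∩ G.B k).card
        rw [hinter k]
    simp only [restrictedGame]
    exact if_congr hdc rfl rfl
  have main : ∀ x y : ℕ, x ∈ G.B p → y ∈ G.B p → x ≠ y →
      DOw G x - DOw (dropPlayer G y) x =
        ∑ R ∈ ((univ : Finset (Fin G.m)).erase p).powerset,
          ((R.card.factorial * (G.m - R.card - 1).factorial : ℝ) / G.m.factorial) *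
            ∑ S ∈ (((G.B p).erase x).erase y).powerset,
              wgt (G.B p).card (S.card + 1) *
                (restrictedGame G (R.biUnion G.B ∪ (S ∪ {y}) ∪ {x}) -
                  restrictedGame G (R.biUnion G.B ∪ (S ∪ {y})) -
                  (restrictedGame G (R.biUnion G.B ∪ S ∪ {x}) -
                    restrictedGame G (R.biUnion G.B ∪ S))) := by
    intro x y hx hy hxy
    have hA : DOw G x =
        ∑ R ∈ ((univ : Finset (Fin G.m)).erase p).powerset,
          ((R.card.factorial * (G.m - R.card - 1).factorial : ℝ) / G.m.factorial) *
            ∑ S ∈ ((G.B p).erase x).powerset,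
              wgt (G.B p).card S.card *
                (restrictedGame G (R.biUnion G.B ∪ S ∪ {x}) -
                  restrictedGame G (R.biUnion G.B ∪ S)) := by
      rw [show DOw G x = Owen G.m (restrictedGame G) G.B x from rfl,
        howen x (restrictedGame G) G.B hx (fun k => Finset.Subset.rfl) hx]
      refine Finset.sum_congr rfl fun R hR => ?_
      rw [Finset.mul_sum]
      refine Finset.sum_congr rfl fun S hS => ?_
      simp only [wgt]
      ring
    have hB : DOw (dropPlayer G y) x =
        ∑ R ∈ ((univ : Finset (Fin G.m)).erase p).powerset,
          ((R.card.factorial * (G.m - R.card - 1).factorial : ℝ) / G.m.factorial) *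
            ∑ S ∈ (((G.B p).erase x).erase y).powerset,
              wgt ((G.B p).card - 1) S.card *
                (restrictedGame G (R.biUnion G.B ∪ S ∪ {x}) -
                  restrictedGame G (R.biUnion G.B ∪ S)) := by
      rw [show DOw (dropPlayer G y) x =
            Owen G.m (restrictedGame (dropPlayer G y)) (fun k => (G.B k).erase y) x from rfl,
        howen x (restrictedGame (dropPlayer G y)) (fun k => (G.B k).erase y) hx
          (fun k => Finset.erase_subset _ _) (Finset.mem_erase.mpr ⟨hxy, hx⟩)]
      refine Finset.sum_congr rfl fun R hR => ?_
      have hRsub : R ⊆ (univ : Finset (Fin G.m)).erase p := Finset.mem_powerset.mp hR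
      rw [Finset.mul_sum, hQ y hy R hRsub]
      refine Finset.sum_congr (by rw [Finset.erase_right_comm]) fun S hS => ?_
      have hSsub : S ⊆ ((G.B p).erase x).erase y := Finset.mem_powerset.mp hS
      have hyS : y ∉ S := fun h => Finset.notMem_erase y _ (hSsub h)
      have hynot : y ∉ R.biUnion G.B ∪ S := by
        simp only [Finset.mem_union]
        rintro (h | h)
        · exact hQnot y hy R hRsub h
        · exact hyS h
      have hynot2 : y ∉ R.biUnion G.B ∪ S ∪ {x} := by
        simp only [Finset.mem_union, Finset.mem_singleton]
        rintro ((h | h) | h)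
        · exact hQnot y hy R hRsub h
        · exact hyS h
        · exact hxy h.symm
      rw [hres y _ hynot2, hres y _ hynot, Finset.card_erase_of_mem hy]
      simp only [wgt]
      ring
    rw [hA, hB, ← Finset.sum_sub_distrib]
    refine Finset.sum_congr rfl fun R hR => ?_
    rw [← mul_sub, half_bc (restrictedGame G) (R.biUnion G.B) (G.B p) x y hx hy hxy]
  have nullzero : ∀ x y : ℕ, x ∈ G.B p → y ∈ G.B p → x ≠ y →
      NullPlayerIn (dropPlayer G y).v (dropPlayer G y).N x → DOw (dropPlayer G y) x = 0 := by
    intro x y hx hy hxy hnull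
    rw [show DOw (dropPlayer G y) x =
          Owen G.m (restrictedGame (dropPlayer G y)) (fun k => (G.B k).erase y) x from rfl,
      howen x (restrictedGame (dropPlayer G y)) (fun k => (G.B k).erase y) hx
        (fun k => Finset.erase_subset _ _) (Finset.mem_erase.mpr ⟨hxy, hx⟩)]
    refine Finset.sum_eq_zero fun R hR => Finset.sum_eq_zero fun S hS => ?_
    have hRsub : R ⊆ (univ : Finset (Fin G.m)).erase p := Finset.mem_powerset.mp hR
    have hSsub : S ⊆ ((G.B p).erase y).erase x := Finset.mem_powerset.mp hS
    rw [hQ y hy R hRsub]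
    set X := R.biUnion G.B ∪ S with hX
    have hyX : y ∉ X := by
      rw [hX]
      simp only [Finset.mem_union]
      rintro (h | h)
      · exact hQnot y hy R hRsub h
      · exact (Finset.mem_erase.mp (Finset.erase_subset _ _ (hSsub h))).1 rfl
    have hxX : x ∉ X := by
      rw [hX]
      simp only [Finset.mem_union]
      rintro (h | h)
      · exact hQnot x hx R hRsub h
      · exact (Finset.mem_erase.mp (hSsub h)).1 rfl
    have hXN : X ⊆ G.N := by
      rw [hX]
      refine Finset.union_subset ?_ ?_
      · intro a ha
        obtain ⟨k, -, hak⟩ := Finset.mem_biUnion.mp ha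
        exact hBN k hak
      · exact fun a ha =>
          hBN p (Finset.erase_subset _ _ (Finset.erase_subset _ _ (hSsub ha)))
    have hXx : X ∪ {x} = insert x X := by rw [Finset.insert_eq, Finset.union_comm]
    have hnv : G.v (insert x X) = G.v X := by
      refine hnull X fun a ha => ?_
      exact Finset.mem_erase.mpr ⟨fun h => hxX (h ▸ ha),
        Finset.mem_erase.mpr ⟨fun h => hyX (h ▸ ha), hXN ha⟩⟩
    suffices h : restrictedGame (dropPlayer G y) (X ∪ {x}) -
        restrictedGame (dropPlayer G y) X = 0 by
      rw [h, mul_zero]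
    rw [hXx]
    by_cases hv : G.v X = 0
    · simp only [restrictedGame]
      rw [show (dropPlayer G y).v = G.v from rfl, hnv, hv]
      simp
    · have hdc : DiverseCoal G X := hDiv X hXN hv
      have hdc1 : DiverseCoal (dropPlayer G y) X := by
        intro k
        show G.d k ≤ (X ∩ (G.B k).erase y).card
        rw [Finset.inter_erase, Finset.erase_eq_of_notMem
          (fun h => hyX (Finset.mem_of_mem_inter_left h))]
        exact hdc k
      have hdc2 : DiverseCoal (dropPlayer G y) (insert x X) := fun k =>
        le_trans (hdc1 k) (Finset.card_le_card
          (Finset.inter_subset_inter (Finset.subset_insert x X) Finset.Subset.rfl))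
      simp only [restrictedGame]
      rw [if_pos hdc2, if_pos hdc1, show (dropPlayer G y).v = G.v from rfl, hnv, sub_self]
  refine ⟨?_, fun hn => nullzero i j hi hj hij hn, fun hn => nullzero j i hj hi hij.symm hn⟩
  rw [main i j hi hj hij, main j i hj hi hij.symm]
  refine Finset.sum_congr rfl fun R hR => ?_
  congr 1
  refine Finset.sum_congr (by rw [Finset.erase_right_comm]) fun S hS => ?_
  rw [show R.biUnion G.B ∪ (S ∪ {j}) ∪ {i} = R.biUnion G.B ∪ (S ∪ {i}) ∪ {j} from by
    ext a; simp only [Finset.mem_union, Finset.mem_singleton]; tauto]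
  simp only [← Finset.union_assoc]
  ring
end
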